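/- Let S be a monoid, λ a nonzero cardinal, n ≤ λ a positive integer, and i ≤ n. Let x be the element of 𝓘_λ^n(S) with rows (a₁,…,a_i), (s₁,…,s_i), (b₁,…,b_i) and y the element with rows (c₁,…,c_i), (t₁,…,t_i), (d₁,…,d_i), both nonzero. Then x 𝓛 y in 𝓘_λ^n(S) if and only if there exists a permutation σ of {1,…,i} such that b_j = d_{σ(j)} and s_j 𝓛 t_{σ(j)} in S for all j = 1,…,i. -/

import Mathlib

/-!
Left multiplication keeps the range points of an element and multiplies each label on the left,
so `x ∈ 𝓘¹ y` sends every column `(b_j, s_j)` of `x` to a column `(d_{τ j}, t_{τ j})` of `y` with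
`s_j ∈ S t_{τ j}`. Since `b` is injective so is `τ`, hence it is a permutation of `Fin i`, and
`y ∈ 𝓘¹ x` gives the reverse divisibility in the same columns. Conversely, given `σ` and
`s_j = u_j t_{σ j}`, the element with rows `(a_j)`, `(u_j)`, `(c_{σ j})` multiplies `y` on the
left to `x`.
-/

open Classical

namespace ISemExt

/-- Carrier for the extension `𝓘_λ^n(S)`: an element is a function assigning to each
pair `(x,y)` of points of `lam` an optional value in `S` (its labelled graph). -/
def Elem (lam S : Type) : Type := lam → lam → Option S

/-- The zero element (the empty map). -/
def zeroE (lam S : Type) : Elem lam S := fun _ _ => none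

/-- Multiplication in `𝓘_λ^n(S)`: composition of labelled partial maps,
multiplying the labels along composable pairs. -/
noncomputable def mulE {lam S : Type} [Mul S] (f g : Elem lam S) : Elem lam S :=
  fun x z =>
    if h : ∃ y s t, f x y = some s ∧ g y z = some t then
      some (h.choose_spec.choose * h.choose_spec.choose_spec.choose)
    else none

/-- The graph of an element. -/
def graphOf {lam S : Type} (f : Elem lam S) : Set (lam × lam) :=
  {p | (f p.1 p.2).isSome}

/-- `Valid n f` says that `f` is an element of `𝓘_λ^n(S)`: it is a partial
injective labelled map (in both directions) of rank at most `n`. -/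
def Valid {lam S : Type} (n : ℕ) (f : Elem lam S) : Prop :=
  (∀ ⦃x y₁ y₂⦄, (f x y₁).isSome → (f x y₂).isSome → y₁ = y₂) ∧
  (∀ ⦃x₁ x₂ y⦄, (f x₁ y).isSome → (f x₂ y).isSome → x₁ = x₂) ∧
  (graphOf f).Finite ∧ (graphOf f).ncard ≤ n

/-- The element with rows `(a₁,…,a_i)`, `(s₁,…,s_i)`, `(b₁,…,b_i)`. -/
noncomputable def mk3 {lam S : Type} {i : ℕ} (a : Fin i → lam) (s : Fin i → S)
    (b : Fin i → lam) : Elem lam S :=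
  fun x y => if h : ∃ j, a j = x ∧ b j = y then some (s h.choose) else none

/-- Green's relation `𝓛` in the monoid `S`. -/
def GreenLS {S : Type} [Monoid S] (x y : S) : Prop :=
  (∃ u, x = u * y) ∧ (∃ v, y = v * x)

/-- Green's relation `𝓛` in the semigroup `𝓘_λ^n(S)` (with identity adjoined). -/
def GreenLI {lam S : Type} [Mul S] (n : ℕ) (f g : Elem lam S) : Prop :=
  (f = g ∨ ∃ u : Elem lam S, Valid n u ∧ f = mulE u g) ∧
  (g = f ∨ ∃ v : Elem lam S, Valid n v ∧ g = mulE v f)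

section Rows

variable {lam S : Type} {i n : ℕ} {a b c d : Fin i → lam} {s t : Fin i → S}

lemma isSome_mk3 {x y : lam} : (mk3 a s b x y).isSome ↔ ∃ j, a j = x ∧ b j = y := by
  unfold mk3
  split_ifs with h <;> simp [h]

lemma mk3_apply_self (ha : Function.Injective a) (j : Fin i) :
    mk3 a s b (a j) (b j) = some (s j) := by
  have h : ∃ k, a k = a j ∧ b k = b j := ⟨j, rfl, rfl⟩
  unfold mk3
  rw [dif_pos h, ha h.choose_spec.1]

lemma exists_of_mk3_eq_some {x y : lam} {w : S} (h : mk3 a s b x y = some w) :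
    ∃ j, a j = x ∧ b j = y ∧ s j = w := by
  unfold mk3 at h
  split_ifs at h with hex
  exact ⟨hex.choose, hex.choose_spec.1, hex.choose_spec.2, Option.some_injective _ h⟩

lemma mk3_eq_none {x y : lam} (h : ¬ ∃ j, a j = x ∧ b j = y) : mk3 a s b x y = none := by
  unfold mk3
  rw [dif_neg h]

lemma mk3_comp_perm (hc : Function.Injective c) (σ : Equiv.Perm (Fin i)) :
    mk3 (c ∘ σ) (t ∘ σ) (d ∘ σ) = mk3 c t d := by
  funext x z
  by_cases hex : ∃ j, c j = x ∧ d j = z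
  · obtain ⟨j, rfl, rfl⟩ := hex
    rw [mk3_apply_self hc j]
    simpa using mk3_apply_self (b := d ∘ σ) (s := t ∘ σ) (hc.comp σ.injective) (σ.symm j)
  · rw [mk3_eq_none hex, mk3_eq_none (by rintro ⟨j, h1, h2⟩; exact hex ⟨σ j, h1, h2⟩)]

lemma graphOf_mk3 : graphOf (mk3 a s b) = Set.range fun j => (a j, b j) := by
  ext ⟨x, y⟩
  simp [graphOf, isSome_mk3]

lemma valid_mk3 (ha : Function.Injective a) (hb : Function.Injective b) (hin : i ≤ n) :
    Valid n (mk3 a s b) := by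
  refine ⟨fun x y₁ y₂ h₁ h₂ => ?_, fun x₁ x₂ y h₁ h₂ => ?_, ?_, ?_⟩
  · obtain ⟨j, hj, rfl⟩ := isSome_mk3.1 h₁
    obtain ⟨k, rfl, rfl⟩ := isSome_mk3.1 h₂
    rw [ha hj]
  · obtain ⟨j, rfl, hj⟩ := isSome_mk3.1 h₁
    obtain ⟨k, rfl, rfl⟩ := isSome_mk3.1 h₂
    rw [hb hj]
  · rw [graphOf_mk3]
    exact Set.finite_range _
  · calc (graphOf (mk3 a s b)).ncard
        = ((fun j => (a j, b j)) '' Set.univ).ncard := by rw [graphOf_mk3, Set.image_univ]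
      _ ≤ (Set.univ : Set (Fin i)).ncard := Set.ncard_image_le
      _ ≤ n := by simpa using hin

end Rows

section Products

variable {lam S : Type} [Mul S] {i : ℕ} {f g : Elem lam S} {x z : lam}

lemma mulE_eq_some {w : S} (hex : ∃ y s t, f x y = some s ∧ g y z = some t)
    (huniq : ∀ y s t, f x y = some s → g y z = some t → s * t = w) :
    mulE f g x z = some w := by
  have hst := hex.choose_spec.choose_spec.choose_spec
  unfold mulE
  rw [dif_pos hex, huniq _ _ _ hst.1 hst.2]

lemma mulE_eq_none (h : ¬ ∃ y s t, f x y = some s ∧ g y z = some t) : mulE f g x z = none := by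
  unfold mulE
  rw [dif_neg h]

lemma exists_of_mulE_eq_some {w : S} (h : mulE f g x z = some w) :
    ∃ y s t, f x y = some s ∧ g y z = some t ∧ s * t = w := by
  unfold mulE at h
  split_ifs at h with hex
  have hst := hex.choose_spec.choose_spec.choose_spec
  exact ⟨_, _, _, hst.1, hst.2, Option.some_injective _ h⟩

variable {a e b : Fin i → lam} {u t : Fin i → S}

lemma mulE_mk3_mk3 (ha : Function.Injective a) (he : Function.Injective e) :
    mulE (mk3 a u e) (mk3 e t b) = mk3 a (fun j => u j * t j) b := by
  funext x z
  by_cases hex : ∃ j, a j = x ∧ b j = z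
  · obtain ⟨j, rfl, rfl⟩ := hex
    rw [mk3_apply_self ha j]
    refine mulE_eq_some ⟨e j, u j, t j, mk3_apply_self ha j, mk3_apply_self he j⟩ ?_
    intro y u' t' hu' ht'
    obtain ⟨k, hk, rfl, rfl⟩ := exists_of_mk3_eq_some hu'
    obtain ⟨m, hm, -, rfl⟩ := exists_of_mk3_eq_some ht'
    obtain rfl := ha hk
    rw [he hm]
  · rw [mk3_eq_none hex]
    refine mulE_eq_none fun ⟨y, u', t', hu', ht'⟩ => ?_
    obtain ⟨k, rfl, rfl, -⟩ := exists_of_mk3_eq_some hu'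
    obtain ⟨m, hm, rfl, -⟩ := exists_of_mk3_eq_some ht'
    rw [he hm] at hex
    exact hex ⟨k, rfl, rfl⟩

end Products

section LeftIdeal

variable {lam S : Type} [Monoid S] {i n : ℕ} {a b c d : Fin i → lam} {s t : Fin i → S}

lemma exists_col_of_mk3_le (ha : Function.Injective a)
    (h : mk3 a s b = mk3 c t d ∨ ∃ u, Valid n u ∧ mk3 a s b = mulE u (mk3 c t d)) (j : Fin i) :
    ∃ k, b j = d k ∧ ∃ w, s j = w * t k := by
  have hj := mk3_apply_self (b := b) (s := s) ha j
  rcases h with h | ⟨u, -, h⟩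
  · rw [h] at hj
    obtain ⟨k, -, hk, hts⟩ := exists_of_mk3_eq_some hj
    exact ⟨k, hk.symm, 1, by rw [one_mul, hts]⟩
  · rw [h] at hj
    obtain ⟨y, w, t', -, ht', hwt⟩ := exists_of_mulE_eq_some hj
    obtain ⟨k, -, hk, rfl⟩ := exists_of_mk3_eq_some ht'
    exact ⟨k, hk.symm, w, hwt.symm⟩

lemma exists_mk3_eq_mulE_of_perm (ha : Function.Injective a) (hc : Function.Injective c)
    (hin : i ≤ n) (σ : Equiv.Perm (Fin i)) (hbd : ∀ j, b j = d (σ j))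
    (hst : ∀ j, ∃ w, s j = w * t (σ j)) :
    ∃ u, Valid n u ∧ mk3 a s b = mulE u (mk3 c t d) := by
  choose w hw using hst
  have hcσ : Function.Injective (c ∘ σ) := hc.comp σ.injective
  refine ⟨mk3 a w (c ∘ σ), valid_mk3 ha hcσ hin, ?_⟩
  rw [← mk3_comp_perm hc σ, mulE_mk3_mk3 ha hcσ]
  congr 1
  · exact funext hw
  · exact funext hbd

end LeftIdeal

theorem greenL_iff_general (lam S : Type) [Monoid S]
    (n i : ℕ) (hin : i ≤ n)
    (a b c d : Fin i → lam) (s t : Fin i → S)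
    (ha : Function.Injective a) (hb : Function.Injective b)
    (hc : Function.Injective c) :
    GreenLI n (mk3 a s b) (mk3 c t d) ↔
      ∃ σ : Equiv.Perm (Fin i), ∀ j, b j = d (σ j) ∧ GreenLS (s j) (t (σ j)) := by
  constructor
  · rintro ⟨hxy, hyx⟩
    choose τ hbτ hsτ using exists_col_of_mk3_le ha hxy
    have hτ : Function.Injective τ := fun j k h => hb (by rw [hbτ, hbτ, h])
    refine ⟨Equiv.ofBijective τ hτ.bijective_of_finite, fun j => ⟨hbτ j, hsτ j, ?_⟩⟩
    obtain ⟨k, hdb, htw⟩ := exists_col_of_mk3_le hc hyx (τ j)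
    obtain rfl : k = j := hb (hdb.symm.trans (hbτ j).symm)
    exact htw
  · rintro ⟨σ, hσ⟩
    refine ⟨.inr (exists_mk3_eq_mulE_of_perm ha hc hin σ (fun j => (hσ j).1)
      fun j => (hσ j).2.1), .inr (exists_mk3_eq_mulE_of_perm hc ha hin σ.symm ?_ ?_)⟩
    · intro k
      simpa using ((hσ (σ.symm k)).1).symm
    · intro k
      simpa using (hσ (σ.symm k)).2.2

/-- Characterization of Green's relation `𝓛` on `𝓘_λ^n(S)` for a monoid `S`. -/
theorem greenL_iff (lam S : Type) [Nonempty lam] [Monoid S]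
    (n i : ℕ) (hn : 0 < n) (hcard : (n : Cardinal) ≤ Cardinal.mk lam)
    (hi : 0 < i) (hin : i ≤ n)
    (a b c d : Fin i → lam) (s t : Fin i → S)
    (ha : Function.Injective a) (hb : Function.Injective b)
    (hc : Function.Injective c) (hd : Function.Injective d) :
    GreenLI n (mk3 a s b) (mk3 c t d) ↔
      ∃ σ : Equiv.Perm (Fin i), ∀ j, b j = d (σ j) ∧ GreenLS (s j) (t (σ j)) :=
  greenL_iff_general lam S n i hin a b c d s t ha hb hc

end ISemExt
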